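/- arXiv:1704.03512 — 2 statements merged into one kernel-verified Lean document; each statement's English description precedes it below -/
import Mathlib

section
/- The Clifford-Gegenbauer polynomials defined by G_{0,m,α} = 1 and the recurrence G_{ℓ+1,m,α}(x) = -2(α-ℓ) x G_{ℓ,m,α}(x) - (1+|x|²) ∂G_{ℓ,m,α}(x) satisfy the Rodrigues formula G_{ℓ,m,α}(x) = (-1)^ℓ (1+|x|²)^{ℓ-α} ∂^ℓ((1+|x|²)^α) for all ℓ ≥ 0. -/
open CliffordAlgebra MeasureTheory

noncomputable section

/-- The negative-definite quadratic form `x ↦ -Σ_j x_j²` on `ℝ^m`. -/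
def Qneg (m : ℕ) : QuadraticForm ℝ (Fin m → ℝ) :=
  -(QuadraticMap.weightedSumSquares ℝ (fun _ : Fin m => (1:ℝ)))

/-- The real Clifford algebra `Cl(m)` with `e_j² = -1` and anticommuting generators. -/
abbrev Cl (m : ℕ) := CliffordAlgebra (Qneg m)

/-- The generators `e_j = ι(e_j)`. -/
def e (m : ℕ) (j : Fin m) : Cl m := ι (Qneg m) (Pi.single j 1)

/-- A fixed basis of the Clifford algebra, used to differentiate (and integrate)
Clifford-algebra-valued functions componentwise. -/
def clBasis (m : ℕ) : Module.Basis (Module.Basis.ofVectorSpaceIndex ℝ (Cl m)) ℝ (Cl m) :=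
  Module.Basis.ofVectorSpace ℝ (Cl m)

/-- The partial derivative `∂_{x_j}` of a Clifford-algebra-valued function,
computed componentwise with respect to a fixed basis. -/
def pderiv (m : ℕ) (j : Fin m) (g : (Fin m → ℝ) → Cl m) (x : Fin m → ℝ) : Cl m :=
  ∑ᶠ i, (fderiv ℝ (fun y => (clBasis m).repr (g y) i) x (Pi.single j 1)) • clBasis m i

/-- The Dirac operator `∂ = Σ_j e_j ∂_{x_j}` (left Clifford multiplication). -/
def dirac (m : ℕ) (g : (Fin m → ℝ) → Cl m) : (Fin m → ℝ) → Cl m :=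
  fun x => ∑ j, e m j * pderiv m j g x

/-- The general Clifford-Gegenbauer polynomials, defined by `G_0 = 1` and the
recurrence `G_{ℓ+1}(x) = -2(α-ℓ) x G_ℓ(x) - (1+|x|²) ∂G_ℓ(x)`. -/
def G (m : ℕ) (α : ℝ) : ℕ → (Fin m → ℝ) → Cl m
  | 0 => fun _ => 1
  | (ℓ + 1) => fun x =>
      (-(2 * (α - (ℓ : ℝ)))) • (ι (Qneg m) x * G m α ℓ x)
        - (1 + ∑ j, x j ^ 2) • dirac m (G m α ℓ) x

/-! On Clifford-valued functions that are finite combinations of smooth scalar functions with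
constant Clifford coefficients (a class containing every `G_ℓ` and stable under `∂`), the Dirac
operator obeys the Leibniz rule `∂(φ g) = φ ∂g + (∇φ) g`. For a radial factor
`φ = ψ(1+|x|²)` the gradient is `2ψ'(1+|x|²) x`, so with `ψ(t) = (-1)^ℓ t^{α-ℓ}` the inductive
step of `∂^ℓ (1+|x|²)^α = (-1)^ℓ (1+|x|²)^{α-ℓ} G_ℓ` is exactly the recurrence defining `G_{ℓ+1}`.
-/

open scoped ContDiff

theorem Module.Basis.finsum_smul_eq_repr_symm {ι R M : Type*} [Semiring R] [AddCommMonoid M]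
    [Module R M] (b : Module.Basis ι R M) (c : ι →₀ R) : ∑ᶠ i, c i • b i = b.repr.symm c := by
  classical
  rw [b.repr_symm_apply, Finsupp.linearCombination_apply, Finsupp.sum,
    finsum_eq_sum_of_support_subset _ (s := c.support)]
  intro i hi
  simp only [Function.mem_support, Finset.mem_coe, Finsupp.mem_support_iff] at hi ⊢
  exact fun h => hi (by rw [h, zero_smul])

theorem iota_eq_sum_smul_e (m : ℕ) (x : Fin m → ℝ) : ι (Qneg m) x = ∑ j, x j • e m j := by
  conv_lhs => rw [pi_eq_sum_univ' x]
  simp only [map_sum, map_smul, e]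

theorem pderiv_sum_smul {ι : Type*} [Fintype ι] {m : ℕ} (f : ι → (Fin m → ℝ) → ℝ) (v : ι → Cl m)
    (j : Fin m) (x : Fin m → ℝ) (hf : ∀ k, DifferentiableAt ℝ (f k) x) :
    pderiv m j (fun y => ∑ k, f k y • v k) x = ∑ k, fderiv ℝ (f k) x (Pi.single j 1) • v k := by
  have hcoord : ∀ i, HasFDerivAt (fun y => (clBasis m).repr (∑ k, f k y • v k) i)
      (∑ k, (clBasis m).repr (v k) i • fderiv ℝ (f k) x) x := by
    intro i
    simp only [map_sum, map_smul, Finsupp.coe_finsetSum, Finset.sum_apply, Finsupp.smul_apply,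
      smul_eq_mul]
    exact HasFDerivAt.fun_sum fun k _ => by
      simpa only [mul_comm] using (hf k).hasFDerivAt.const_mul ((clBasis m).repr (v k) i)
  calc pderiv m j (fun y => ∑ k, f k y • v k) x
      = ∑ᶠ i, (∑ k, fderiv ℝ (f k) x (Pi.single j 1) • (clBasis m).repr (v k)) i • clBasis m i := by
        refine finsum_congr fun i => ?_
        rw [(hcoord i).fderiv]
        simp [mul_comm]
    _ = ∑ k, fderiv ℝ (f k) x (Pi.single j 1) • v k := by
        rw [Module.Basis.finsum_smul_eq_repr_symm]
        simp

theorem dirac_sum_smul {ι : Type*} [Fintype ι] {m : ℕ} (f : ι → (Fin m → ℝ) → ℝ) (v : ι → Cl m)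
    (x : Fin m → ℝ) (hf : ∀ k, DifferentiableAt ℝ (f k) x) :
    dirac m (fun y => ∑ k, f k y • v k) x
      = ∑ p : ι × Fin m, fderiv ℝ (f p.1) x (Pi.single p.2 1) • (e m p.2 * v p.1) := by
  simp only [dirac, pderiv_sum_smul f v _ x hf, Finset.mul_sum, mul_smul_comm,
    Fintype.sum_prod_type]
  exact Finset.sum_comm

/-- `pderiv` is computed coordinatewise through `fderiv`, whose junk value at non-differentiable
points makes it useless in general; on these functions it obeys the usual rules. -/
def IsSmoothCombination (m : ℕ) (g : (Fin m → ℝ) → Cl m) : Prop :=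
  ∃ (ι : Type) (_ : Fintype ι) (f : ι → (Fin m → ℝ) → ℝ) (v : ι → Cl m),
    (∀ k, ContDiff ℝ ∞ (f k)) ∧ g = fun y => ∑ k, f k y • v k

namespace IsSmoothCombination

variable {m : ℕ} {g h : (Fin m → ℝ) → Cl m}

theorem const (m : ℕ) (v : Cl m) : IsSmoothCombination m fun _ => v :=
  ⟨Unit, inferInstance, fun _ _ => 1, fun _ => v, fun _ => contDiff_const, by simp⟩

theorem sub (hg : IsSmoothCombination m g) (hh : IsSmoothCombination m h) :
    IsSmoothCombination m fun y => g y - h y := by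
  obtain ⟨ι, _, f, v, hf, rfl⟩ := hg
  obtain ⟨κ, _, f', v', hf', rfl⟩ := hh
  refine ⟨ι ⊕ κ, inferInstance, Sum.elim f (fun k y => -f' k y), Sum.elim v v',
    fun | .inl k => hf k | .inr k => (hf' k).neg, ?_⟩
  funext y
  simp [Fintype.sum_sum_type, sub_eq_add_neg]

theorem smul {φ : (Fin m → ℝ) → ℝ} (hφ : ContDiff ℝ ∞ φ) (hg : IsSmoothCombination m g) :
    IsSmoothCombination m fun y => φ y • g y := by
  obtain ⟨ι, _, f, v, hf, rfl⟩ := hg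
  refine ⟨ι, inferInstance, fun k y => φ y * f k y, v, fun k => hφ.mul (hf k), ?_⟩
  funext y
  simp [Finset.smul_sum, smul_smul]

theorem iota_mul (hg : IsSmoothCombination m g) :
    IsSmoothCombination m fun y => ι (Qneg m) y * g y := by
  obtain ⟨ι, _, f, v, hf, rfl⟩ := hg
  refine ⟨ι × Fin m, inferInstance, fun p y => y p.2 * f p.1 y, fun p => e m p.2 * v p.1,
    fun p => (contDiff_apply ℝ ℝ p.2).mul (hf p.1), ?_⟩
  funext y
  simp only [iota_eq_sum_smul_e, Finset.sum_mul, Finset.mul_sum, Fintype.sum_prod_type,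
    smul_mul_smul_comm]

theorem dirac (hg : IsSmoothCombination m g) : IsSmoothCombination m (dirac m g) := by
  obtain ⟨ι, _, f, v, hf, rfl⟩ := hg
  refine ⟨ι × Fin m, inferInstance, fun p y => fderiv ℝ (f p.1) y (Pi.single p.2 1),
    fun p => e m p.2 * v p.1,
    fun p => (contDiff_infty_iff_fderiv.mp (hf p.1)).2.clm_apply contDiff_const, ?_⟩
  funext y
  exact dirac_sum_smul f v y fun k => (hf k).differentiable (by simp) y

end IsSmoothCombination

def oneAddSq (m : ℕ) (x : Fin m → ℝ) : ℝ := 1 + ∑ j, x j ^ 2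

theorem oneAddSq_pos (m : ℕ) (x : Fin m → ℝ) : 0 < oneAddSq m x := by
  unfold oneAddSq; positivity

theorem contDiff_oneAddSq (m : ℕ) : ContDiff ℝ ∞ (oneAddSq m) :=
  contDiff_const.add (ContDiff.sum fun j _ => (contDiff_apply ℝ ℝ j).pow 2)

theorem hasFDerivAt_oneAddSq (m : ℕ) (x : Fin m → ℝ) :
    HasFDerivAt (oneAddSq m)
      (∑ j, (2 * x j) • ContinuousLinearMap.proj (R := ℝ) (φ := fun _ : Fin m => ℝ) j) x := by
  have h := (HasFDerivAt.fun_sum (u := Finset.univ) fun j _ => HasFDerivAt.pow (𝔸 := ℝ)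
    (hasFDerivAt_apply (𝕜 := ℝ) (F' := fun _ => ℝ) j x) 2).const_add 1
  simp only [nsmul_eq_mul, Nat.cast_ofNat, Nat.add_one_sub_one, pow_one] at h
  exact h

section Leibniz

variable {m : ℕ} {g : (Fin m → ℝ) → Cl m} {x : Fin m → ℝ}

theorem pderiv_smul {φ : (Fin m → ℝ) → ℝ} {φ' : (Fin m → ℝ) →L[ℝ] ℝ}
    (hg : IsSmoothCombination m g) (hφ : HasFDerivAt φ φ' x) (j : Fin m) :
    pderiv m j (fun y => φ y • g y) x = φ' (Pi.single j 1) • g x + φ x • pderiv m j g x := by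
  obtain ⟨ι, _, f, v, hf, rfl⟩ := hg
  have hfx : ∀ k, HasFDerivAt (f k) (fderiv ℝ (f k) x) x :=
    fun k => ((hf k).differentiable (by simp) x).hasFDerivAt
  have hprod : (fun y => φ y • ∑ k, f k y • v k) = fun y => ∑ k, (φ y * f k y) • v k := by
    simp only [Finset.smul_sum, smul_smul]
  rw [hprod, pderiv_sum_smul (fun k y => φ y * f k y) v j x
      fun k => (hφ.fun_mul (hfx k)).differentiableAt,
    pderiv_sum_smul f v j x fun k => (hfx k).differentiableAt]
  simp only [fun k => (hφ.fun_mul (hfx k)).fderiv, Finset.smul_sum, smul_smul,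
    ← Finset.sum_add_distrib, ← add_smul]
  congr! 2
  simp
  ring

theorem dirac_smul {φ : (Fin m → ℝ) → ℝ} {φ' : (Fin m → ℝ) →L[ℝ] ℝ}
    (hg : IsSmoothCombination m g) (hφ : HasFDerivAt φ φ' x) :
    dirac m (fun y => φ y • g y) x
      = φ x • dirac m g x + (∑ j, φ' (Pi.single j 1) • e m j) * g x := by
  simp only [dirac, pderiv_smul hg hφ, mul_add, Finset.sum_add_distrib, Finset.smul_sum,
    Finset.sum_mul, mul_smul_comm, smul_mul_assoc, add_comm]

theorem dirac_comp_oneAddSq_smul {ψ : ℝ → ℝ} {ψ' : ℝ} (hg : IsSmoothCombination m g)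
    (hψ : HasDerivAt ψ ψ' (oneAddSq m x)) :
    dirac m (fun y => ψ (oneAddSq m y) • g y) x
      = ψ (oneAddSq m x) • dirac m g x + (2 * ψ') • (ι (Qneg m) x * g x) := by
  rw [dirac_smul (φ := fun y => ψ (oneAddSq m y)) hg
      (hψ.comp_hasFDerivAt x (hasFDerivAt_oneAddSq m x)), iota_eq_sum_smul_e, ← smul_mul_assoc]
  congr 2
  simp [Finset.smul_sum, Pi.single_apply, smul_smul, mul_assoc, mul_left_comm]

end Leibniz

theorem isSmoothCombination_G (m : ℕ) (α : ℝ) (ℓ : ℕ) : IsSmoothCombination m (G m α ℓ) := by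
  induction ℓ with
  | zero => exact IsSmoothCombination.const m 1
  | succ ℓ ih =>
    exact (ih.iota_mul.smul contDiff_const).sub (ih.dirac.smul (contDiff_oneAddSq m))

theorem iterate_dirac_oneAddSq_rpow (m : ℕ) (α : ℝ) (ℓ : ℕ) :
    (dirac m)^[ℓ] (fun y => algebraMap ℝ (Cl m) (oneAddSq m y ^ α))
      = fun y => ((-1) ^ ℓ * oneAddSq m y ^ (α - ℓ)) • G m α ℓ y := by
  induction ℓ with
  | zero =>
    funext y
    simp [G, Algebra.algebraMap_eq_smul_one]
  | succ ℓ ih =>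
    funext x
    have hψ : HasDerivAt (fun t => (-1) ^ ℓ * t ^ (α - ℓ))
        ((-1) ^ ℓ * ((α - ℓ) * oneAddSq m x ^ (α - ℓ - 1))) (oneAddSq m x) :=
      (Real.hasDerivAt_rpow_const (Or.inl (oneAddSq_pos m x).ne')).const_mul _
    have hN : oneAddSq m x ^ (α - ℓ) = oneAddSq m x ^ (α - ℓ - 1) * oneAddSq m x := by
      rw [← Real.rpow_add_one (oneAddSq_pos m x).ne', sub_add_cancel]
    rw [Function.iterate_succ_apply', ih,
      dirac_comp_oneAddSq_smul (isSmoothCombination_G m α ℓ) hψ, hN]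
    show _ = _ • ((-(2 * (α - ℓ))) • (ι (Qneg m) x * G m α ℓ x)
        - oneAddSq m x • dirac m (G m α ℓ) x)
    push_cast
    rw [sub_add_eq_sub_sub]
    module

/-- the Rodrigues formula
`G_ℓ(x) = (-1)^ℓ (1+|x|²)^{ℓ-α} ∂^ℓ((1+|x|²)^α)`. -/
theorem G_rodrigues (m : ℕ) (α : ℝ) (ℓ : ℕ) (x : Fin m → ℝ) :
    G m α ℓ x =
      ((-1 : ℝ) ^ ℓ * (1 + ∑ j, x j ^ 2) ^ ((ℓ : ℝ) - α)) •
        (dirac m)^[ℓ] (fun y => algebraMap ℝ (Cl m) ((1 + ∑ j, y j ^ 2) ^ α)) x := by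
  change _ = ((-1 : ℝ) ^ ℓ * oneAddSq m x ^ ((ℓ : ℝ) - α)) •
      (dirac m)^[ℓ] (fun y => algebraMap ℝ (Cl m) (oneAddSq m y ^ α)) x
  rw [iterate_dirac_oneAddSq_rpow, smul_smul, mul_mul_mul_comm, ← mul_pow,
    ← Real.rpow_add (oneAddSq_pos m x)]
  simp
end
end

section
/- The Chebyshev polynomials of the first kind satisfy the Rodrigues-type formula T_n(x) = (2^n (-1)^n n! / (2n)!) (1-x²)^{1/2} dⁿ/dxⁿ[(1-x²)^{n-1/2}] for -1 < x < 1, where T_n is characterized by T_n(cos θ) = cos(nθ). -/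
/-!
Write `1 - t² = (1 - t)(1 + t)` and expand the `n`-th derivative of
`(1 - t)^(n - 1/2) (1 + t)^(n - 1/2)` by the Leibniz rule. The falling factorials of `n - 1/2`
that appear are quotients of the Pochhammer symbols `(1/2)_m = (2m)! / (4^m m!)`, and they combine
into `(1/2)_n · C(2n, 2i)`; the half-integer powers cancel against `(1 - x²)^(1/2)`, leaving
`(-1)^n (1/2)_n ∑ C(2n, 2i) (1 + x)^i (x - 1)^(n - i)`. This sum is the real part of
`(√(1 + x) + i √(1 - x))^(2n) = (2 e^(iθ))^n` where `x = cos θ`, that is `2^n T_n(x)`.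
-/

open Polynomial Finset

theorem ascPochhammer_eval_half (m : ℕ) :
    (ascPochhammer ℝ m).eval (1 / 2) = (2 * m).factorial / (4 ^ m * m.factorial) := by
  induction m with
  | zero => simp
  | succ m ih =>
    rw [ascPochhammer_succ_eval, ih, show 2 * (m + 1) = 2 * m + 1 + 1 by ring,
      Nat.factorial_succ, Nat.factorial_succ, Nat.factorial_succ]
    push_cast
    field_simp
    ring

theorem descPochhammer_eval_natCast_sub_half_mul {n i : ℕ} (hi : i ≤ n) :
    (descPochhammer ℝ i).eval ((n : ℝ) - 1 / 2) * (ascPochhammer ℝ (n - i)).eval (1 / 2) =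
      (ascPochhammer ℝ n).eval (1 / 2) := by
  obtain ⟨m, rfl⟩ := Nat.exists_eq_add_of_le' hi
  have := congrArg (eval (1 / 2 : ℝ)) (ascPochhammer_mul ℝ m i)
  rw [eval_mul, eval_comp] at this
  rw [Nat.add_sub_cancel, descPochhammer_eval_eq_ascPochhammer, ← this, mul_comm]
  congr 2
  simp
  ring

theorem choose_mul_ascPochhammer_eval_half {n i : ℕ} (hi : i ≤ n) :
    n.choose i * (ascPochhammer ℝ n).eval (1 / 2) =
      (2 * n).choose (2 * i) * (ascPochhammer ℝ i).eval (1 / 2) *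
        (ascPochhammer ℝ (n - i)).eval (1 / 2) := by
  obtain ⟨m, rfl⟩ := Nat.exists_eq_add_of_le' hi
  rw [Nat.add_sub_cancel, Nat.cast_choose ℝ hi, Nat.cast_choose ℝ (by omega),
    ascPochhammer_eval_half, ascPochhammer_eval_half, ascPochhammer_eval_half,
    show 2 * (m + i) - 2 * i = 2 * m by omega, Nat.add_sub_cancel, pow_add]
  field_simp

theorem choose_mul_descPochhammer_eval_sub_half {n i : ℕ} (hi : i ≤ n) :
    n.choose i * (descPochhammer ℝ i).eval ((n : ℝ) - 1 / 2) *
        (descPochhammer ℝ (n - i)).eval ((n : ℝ) - 1 / 2) =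
      (2 * n).choose (2 * i) * (ascPochhammer ℝ n).eval (1 / 2) := by
  have hpos : ∀ m, 0 < (ascPochhammer ℝ m).eval (1 / 2) := fun m =>
    ascPochhammer_pos m _ (by norm_num)
  have h₁ := descPochhammer_eval_natCast_sub_half_mul hi
  have h₂ := descPochhammer_eval_natCast_sub_half_mul (Nat.sub_le n i)
  rw [Nat.sub_sub_self hi] at h₂
  have h₃ := choose_mul_ascPochhammer_eval_half hi
  rw [eq_div_of_mul_eq (hpos _).ne' h₁, eq_div_of_mul_eq (hpos _).ne' h₂]
  have := (hpos (n - i)).ne'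
  have := (hpos i).ne'
  field_simp
  linear_combination (ascPochhammer ℝ n).eval (1 / 2) * h₃

theorem iteratedDeriv_const_sub_rpow (c p x : ℝ) (k : ℕ) :
    iteratedDeriv k (fun t => (c - t) ^ p) x =
      (-1) ^ k * (descPochhammer ℝ k).eval p * (c - x) ^ (p - k) := by
  rw [iteratedDeriv_comp_const_sub k (fun y => y ^ p), iteratedDeriv_eq_iterate]
  dsimp only
  rw [Real.iter_deriv_rpow_const, smul_eq_mul, mul_assoc]

theorem iteratedDeriv_const_add_rpow (c p x : ℝ) (k : ℕ) :
    iteratedDeriv k (fun t => (c + t) ^ p) x =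
      (descPochhammer ℝ k).eval p * (c + x) ^ (p - k) := by
  rw [iteratedDeriv_comp_const_add k (fun y => y ^ p), iteratedDeriv_eq_iterate]
  exact Real.iter_deriv_rpow_const p (c + x) k

theorem iteratedDeriv_one_sub_sq_rpow (p : ℝ) (n : ℕ) {x : ℝ} (hx : x ∈ Set.Ioo (-1) 1) :
    iteratedDeriv n (fun t => (1 - t ^ 2) ^ p) x =
      ∑ i ∈ range (n + 1), n.choose i *
        ((-1) ^ i * (descPochhammer ℝ i).eval p * (1 - x) ^ (p - i)) *
        ((descPochhammer ℝ (n - i)).eval p * (1 + x) ^ (p - (n - i : ℕ))) := by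
  have hfactor : (fun t => (1 - t ^ 2) ^ p) =ᶠ[nhds x] fun t => (1 - t) ^ p * (1 + t) ^ p := by
    filter_upwards [isOpen_Ioo.mem_nhds hx] with t ht
    rw [← Real.mul_rpow (by linarith [ht.2]) (by linarith [ht.1])]
    ring_nf
  rw [hfactor.iteratedDeriv_eq, iteratedDeriv_fun_mul]
  · simp only [iteratedDeriv_const_sub_rpow, iteratedDeriv_const_add_rpow]
  · exact (contDiffAt_const.sub contDiffAt_id).rpow_const_of_ne (by simp; linarith [hx.2])
  · exact (contDiffAt_const.add contDiffAt_id).rpow_const_of_ne (by simp; linarith [hx.1])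

theorem rpow_half_mul_rpow_natCast_sub_half {y : ℝ} (hy : 0 < y) (m : ℕ) :
    y ^ ((1 : ℝ) / 2) * y ^ ((m : ℝ) - 1 / 2) = y ^ m := by
  rw [← Real.rpow_add hy, add_sub_cancel, Real.rpow_natCast]

theorem one_sub_sq_rpow_half_mul_iteratedDeriv (n : ℕ) {x : ℝ} (hx : x ∈ Set.Ioo (-1) 1) :
    (1 - x ^ 2) ^ ((1 : ℝ) / 2) *
        iteratedDeriv n (fun t => (1 - t ^ 2) ^ ((n : ℝ) - 1 / 2)) x =
      (-1) ^ n * (ascPochhammer ℝ n).eval (1 / 2) *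
        ∑ i ∈ range (n + 1), (2 * n).choose (2 * i) * (1 + x) ^ i * (x - 1) ^ (n - i) := by
  have h₁ : 0 < 1 - x := by linarith [hx.2]
  have h₂ : 0 < 1 + x := by linarith [hx.1]
  rw [iteratedDeriv_one_sub_sq_rpow _ _ hx, mul_sum, mul_sum]
  refine sum_congr rfl fun i hi => ?_
  have hin : i ≤ n := Nat.lt_succ_iff.mp (mem_range.mp hi)
  have e₁ : (n : ℝ) - 1 / 2 - i = (n - i : ℕ) - 1 / 2 := by push_cast [hin]; ring
  have e₂ : (n : ℝ) - 1 / 2 - (n - i : ℕ) = i - 1 / 2 := by push_cast [hin]; ring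
  have hsign : (-1 : ℝ) ^ i * (1 - x) ^ (n - i) = (-1) ^ n * (x - 1) ^ (n - i) := by
    rw [← neg_sub x 1, neg_pow (x - 1), ← mul_assoc, ← pow_add, Nat.add_sub_cancel' hin]
  rw [show 1 - x ^ 2 = (1 - x) * (1 + x) by ring, Real.mul_rpow h₁.le h₂.le, e₁, e₂]
  calc (1 - x) ^ ((1 : ℝ) / 2) * (1 + x) ^ ((1 : ℝ) / 2) *
        (n.choose i * ((-1) ^ i * (descPochhammer ℝ i).eval ((n : ℝ) - 1 / 2) *
          (1 - x) ^ (((n - i : ℕ) : ℝ) - 1 / 2)) *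
          ((descPochhammer ℝ (n - i)).eval ((n : ℝ) - 1 / 2) * (1 + x) ^ ((i : ℝ) - 1 / 2)))
      = n.choose i * (descPochhammer ℝ i).eval ((n : ℝ) - 1 / 2) *
          (descPochhammer ℝ (n - i)).eval ((n : ℝ) - 1 / 2) * ((-1) ^ i *
          ((1 - x) ^ ((1 : ℝ) / 2) * (1 - x) ^ (((n - i : ℕ) : ℝ) - 1 / 2)) *
          ((1 + x) ^ ((1 : ℝ) / 2) * (1 + x) ^ ((i : ℝ) - 1 / 2))) := by ring
    _ = _ := by
      rw [choose_mul_descPochhammer_eval_sub_half hin, rpow_half_mul_rpow_natCast_sub_half h₁,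
        rpow_half_mul_rpow_natCast_sub_half h₂, hsign]
      ring

theorem Finset.sum_range_two_mul_add_one {M : Type*} [AddCommMonoid M] (f : ℕ → M) (n : ℕ) :
    ∑ k ∈ range (2 * n + 1), f k =
      ∑ i ∈ range (n + 1), f (2 * i) + ∑ i ∈ range n, f (2 * i + 1) := by
  induction n with
  | zero => simp
  | succ n ih =>
    rw [show 2 * (n + 1) + 1 = 2 * n + 1 + 1 + 1 by ring, sum_range_succ, sum_range_succ, ih,
      sum_range_succ (fun i => f (2 * i)) (n + 1), sum_range_succ (fun i => f (2 * i + 1)) n,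
      show 2 * (n + 1) = 2 * n + 1 + 1 by ring]
    abel

section

open Complex

theorem re_add_mul_I_pow_two_mul (a b : ℝ) (n : ℕ) :
    (((a : ℂ) + b * I) ^ (2 * n)).re =
      ∑ i ∈ range (n + 1), (2 * n).choose (2 * i) * (a ^ 2) ^ i * (-b ^ 2) ^ (n - i) := by
  have hI : ((b : ℂ) * I) ^ 2 = ((-b ^ 2 : ℝ) : ℂ) := by push_cast; ring_nf; simp
  rw [add_pow, re_sum, sum_range_two_mul_add_one]
  have hodd : ∀ i ∈ range n,
      ((a : ℂ) ^ (2 * i + 1) * (b * I) ^ (2 * n - (2 * i + 1)) * (2 * n).choose (2 * i + 1)).re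
        = 0 := by
    intro i hi
    rw [show 2 * n - (2 * i + 1) = 2 * (n - i - 1) + 1 by have := mem_range.mp hi; omega,
      pow_succ ((b : ℂ) * I), pow_mul ((b : ℂ) * I), hI]
    simp [← ofReal_pow, -ofReal_neg]
  rw [sum_eq_zero hodd, add_zero]
  refine sum_congr rfl fun i hi => ?_
  rw [show 2 * n - 2 * i = 2 * (n - i) by omega, pow_mul, pow_mul ((b : ℂ) * I), hI]
  norm_cast
  ring

theorem sum_choose_two_mul_mul_pow_eq_two_pow_mul_T (n : ℕ) {x : ℝ}
    (hx : x ∈ Set.Icc (-1) 1) :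
    ∑ i ∈ range (n + 1), (2 * n).choose (2 * i) * (1 + x) ^ i * (x - 1) ^ (n - i) =
      2 ^ n * (Chebyshev.T ℝ n).eval x := by
  set θ := Real.arccos x
  have hcos : Real.cos θ = x := Real.cos_arccos hx.1 hx.2
  have hsin : Real.sin θ = √(1 + x) * √(1 - x) := by
    rw [Real.sin_arccos, ← Real.sqrt_mul (by linarith [hx.1])]
    ring_nf
  have ha : √(1 + x) ^ 2 = 1 + x := Real.sq_sqrt (by linarith [hx.1])
  have hb : √(1 - x) ^ 2 = 1 - x := Real.sq_sqrt (by linarith [hx.2])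
  have hsq : ((√(1 + x) : ℂ) + √(1 - x) * I) ^ 2 = 2 * (Real.cos θ + Real.sin θ * I) := by
    have ha' : (√(1 + x) : ℂ) ^ 2 = 1 + x := by exact_mod_cast ha
    have hb' : (√(1 - x) : ℂ) ^ 2 = 1 - x := by exact_mod_cast hb
    rw [hsin, hcos]
    push_cast
    linear_combination ha' - hb' + (√(1 - x) : ℂ) ^ 2 * I_sq
  rw [← ha, show x - 1 = -√(1 - x) ^ 2 by rw [hb]; ring, ← re_add_mul_I_pow_two_mul, pow_mul,
    hsq, mul_pow, ofReal_cos, ofReal_sin, cos_add_sin_mul_I_pow, ← hcos, Chebyshev.T_real_cos]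
  simp [← ofReal_natCast, ← ofReal_mul, ← ofReal_cos, ← ofReal_sin, ← ofReal_ofNat,
    ← ofReal_pow]

end

/-- the Chebyshev polynomials of the first kind satisfy the
Rodrigues-type formula
`T_n(x) = (2^n (-1)^n n!/(2n)!) (1-x²)^{1/2} dⁿ/dxⁿ[(1-x²)^{n-1/2}]`
for `-1 < x < 1`. -/
theorem chebyshev_rodrigues (n : ℕ) (x : ℝ) (hx : -1 < x) (hx' : x < 1) :
    (Polynomial.Chebyshev.T ℝ n).eval x =
      (2 ^ n * (-1 : ℝ) ^ n * (n.factorial : ℝ) / ((2 * n).factorial : ℝ)) *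
        (1 - x ^ 2) ^ ((1 : ℝ) / 2) *
        iteratedDeriv n (fun t : ℝ => (1 - t ^ 2) ^ ((n : ℝ) - 1 / 2)) x := by
  have hx₀ : x ∈ Set.Ioo (-1) 1 := ⟨hx, hx'⟩
  rw [mul_assoc, one_sub_sq_rpow_half_mul_iteratedDeriv n hx₀,
    sum_choose_two_mul_mul_pow_eq_two_pow_mul_T n (Set.Ioo_subset_Icc_self hx₀),
    ascPochhammer_eval_half]
  have hsign : (-1 : ℝ) ^ n * (-1) ^ n = 1 := by rw [← mul_pow]; norm_num
  have hfour : (4 : ℝ) ^ n = 2 ^ n * 2 ^ n := by rw [← mul_pow]; norm_num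
  field_simp
  linear_combination (Chebyshev.T ℝ n).eval x * (hfour - (2 : ℝ) ^ n * 2 ^ n * hsign)
end
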